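/- There exists a constant c > 0, depending only on φ₀, such that for every ψ satisfying (Ψ), every integer j ≤ −2, and every ξ ∈ ℝ² with 2^{j−1} ≤ |ξ| ≤ 2^{j+1}, one has (4π·2^{2j})^{-1} ∫_{ℝ²} exp(−|ξ−η|²/(4·2^{2j})) φ̂₀(2^{-j}η) (1 − η₂²/|η|²) (η₂²/|η|³) (ψ̂ * ψ̂)(η) dη ≥ c · 2^{-j}. -/

import Mathlib

open MeasureTheory Filter Complex SchwartzMap
open scoped ENNReal Topology FourierTransform

noncomputable section

/-- The plane `ℝ²`. -/
abbrev Plane := EuclideanSpace ℝ (Fin 2)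

/-- The Fourier transform on `ℝ²`. -/
def FT (f : Plane → ℂ) : Plane → ℂ := 𝓕 f

/-- The inverse Fourier transform on `ℝ²`. -/
def FTinv (f : Plane → ℂ) : Plane → ℂ := 𝓕⁻ f

/-- Partial derivative `∂_{x_m}`. -/
def pd (m : Fin 2) (f : Plane → ℂ) : Plane → ℂ :=
  fun x => fderiv ℝ f x (EuclideanSpace.single m (1:ℝ))

/-- `φ₀` generates a homogeneous Littlewood–Paley decomposition: its Fourier transform is
real-valued with `0 ≤ φ̂₀ ≤ 1`, supported in the annulus `{1/2 ≤ |ξ| ≤ 2}`, and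
`Σ_{j∈ℤ} φ̂₀(2^{-j} ξ) = 1` for `ξ ≠ 0`. -/
structure IsLP (φ0 : 𝓢(Plane, ℂ)) : Prop where
  im_zero : ∀ ξ, (FT φ0 ξ).im = 0
  nonneg : ∀ ξ, 0 ≤ (FT φ0 ξ).re
  le_one : ∀ ξ, (FT φ0 ξ).re ≤ 1
  support : ∀ ξ, FT φ0 ξ ≠ 0 → 1/2 ≤ ‖ξ‖ ∧ ‖ξ‖ ≤ 2
  partition : ∀ ξ : Plane, ξ ≠ 0 → HasSum (fun j : ℤ => FT φ0 ((2:ℝ)^(-j) • ξ)) 1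

/-- The Littlewood–Paley block `Δ_j f = F⁻¹[φ̂₀(2^{-j}·) F[f]]`. -/
def LP (φ0 : 𝓢(Plane, ℂ)) (j : ℤ) (f : Plane → ℂ) : Plane → ℂ :=
  FTinv (fun ξ => FT φ0 ((2:ℝ)^(-j) • ξ) * FT f ξ)

/-- The homogeneous Besov norm `‖f‖_{Ḃ^s_{p,q}}` (with values in `ℝ≥0∞`). -/
def besov (φ0 : 𝓢(Plane, ℂ)) (s : ℝ) (p q : ℝ≥0∞) (f : Plane → ℂ) : ℝ≥0∞ :=
  if q = ∞ then ⨆ j : ℤ, (2:ℝ≥0∞) ^ (s * (j:ℝ)) * eLpNorm (LP φ0 j f) p volume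
  else (∑' j : ℤ, ((2:ℝ≥0∞) ^ (s * (j:ℝ)) * eLpNorm (LP φ0 j f) p volume) ^ q.toReal)
        ^ (1/q.toReal)

/-- Besov norm of a vector field (sum of the norms of the components). -/
def besovVec (φ0 : 𝓢(Plane, ℂ)) (s : ℝ) (p q : ℝ≥0∞) (u : Fin 2 → Plane → ℂ) : ℝ≥0∞ :=
  ∑ m : Fin 2, besov φ0 s p q (u m)

/-- `L^p` norm of a vector field (sum of the norms of the components). -/
def lpVec (p : ℝ≥0∞) (u : Fin 2 → Plane → ℂ) : ℝ≥0∞ :=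
  ∑ m : Fin 2, eLpNorm (u m) p volume

/-- The tensor product `u ⊗ v` of two vector fields. -/
def tens (u v : Fin 2 → Plane → ℂ) : Fin 2 → Fin 2 → Plane → ℂ :=
  fun k l x => u k x * v l x

/-- The divergence of a matrix field. -/
def divMat (F : Fin 2 → Fin 2 → Plane → ℂ) : Fin 2 → Plane → ℂ :=
  fun m x => ∑ l : Fin 2, pd l (F m l) x

/-- `∇^⊥ f = (-∂_{x₂} f, ∂_{x₁} f)`. -/
def perpGrad (f : Plane → ℂ) : Fin 2 → Plane → ℂ :=
  ![fun x => -(pd 1 f x), pd 0 f]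

/-- A vector field is divergence free. -/
def DivFree (u : Fin 2 → Plane → ℂ) : Prop :=
  ∀ x, ∑ m : Fin 2, pd m (u m) x = 0

/-- A vector field is real valued. -/
def RealValued (u : Fin 2 → Plane → ℂ) : Prop :=
  ∀ m x, (u m x).im = 0

/-- The operator `(-Δ)⁻¹ ℙ div` applied to a matrix field `F`, defined on the Fourier side:
the `m`-th component is the inverse Fourier transform of
`ξ ↦ |ξ|⁻² Σ_{k,l} (δ_{mk} - ξ_m ξ_k |ξ|⁻²) i ξ_l F[F_{kl}](ξ)`. -/
def invLapPdiv (F : Fin 2 → Fin 2 → Plane → ℂ) : Fin 2 → Plane → ℂ :=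
  fun m => FTinv (fun ξ =>
    ((((‖ξ‖^2 : ℝ) : ℂ))⁻¹) * ∑ k : Fin 2, ∑ l : Fin 2,
      (((if m = k then (1:ℂ) else 0) - ((ξ m * ξ k : ℝ) : ℂ) / ((‖ξ‖^2 : ℝ) : ℂ))
        * (Complex.I * ((ξ l : ℝ) : ℂ)) * FT (F k l) ξ))

/-- `ψ` satisfies condition (Ψ): its Fourier transform is radial, real-valued with values
in `[0,1]`, supported in `{|ξ| ≤ 2}` and equal to `1` on `{|ξ| ≤ 1}`. -/
structure IsPsi (ψ : 𝓢(Plane, ℂ)) : Prop where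
  radial : ∀ ξ η : Plane, ‖ξ‖ = ‖η‖ → FT ψ ξ = FT ψ η
  im_zero : ∀ ξ, (FT ψ ξ).im = 0
  nonneg : ∀ ξ, 0 ≤ (FT ψ ξ).re
  le_one : ∀ ξ, (FT ψ ξ).re ≤ 1
  support : ∀ ξ, FT ψ ξ ≠ 0 → ‖ξ‖ ≤ 2
  eq_one : ∀ ξ : Plane, ‖ξ‖ ≤ 1 → FT ψ ξ = 1

/-- The vector field `(0, ∂_{x₂}(ψ²))ᵀ`. -/
def vecPsiSq (ψ : 𝓢(Plane, ℂ)) : Fin 2 → Plane → ℂ :=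
  ![fun _ => 0, pd 1 (fun x => (ψ x)^2)]

/-- The vector field `(-Δ)⁻¹ ℙ (0, ∂_{x₂}(ψ²))ᵀ`, defined on the Fourier side: its `m`-th
component is the inverse Fourier transform of
`ξ ↦ (δ_{m2} - ξ_m ξ₂ |ξ|⁻²) i ξ₂ |ξ|⁻² F[ψ²](ξ)`. -/
def invLapPVecPsiSq (ψ : 𝓢(Plane, ℂ)) : Fin 2 → Plane → ℂ :=
  fun m => FTinv (fun ξ =>
    ((if m = (1 : Fin 2) then (1:ℂ) else 0) - ((ξ m * ξ 1 : ℝ) : ℂ) / ((‖ξ‖^2 : ℝ) : ℂ))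
      * (Complex.I * ((ξ 1 : ℝ) : ℂ)) * ((((‖ξ‖^2 : ℝ) : ℂ))⁻¹)
      * FT (fun x => (ψ x)^2) ξ)

/-- `‖∇ψ‖²_{L²(ℝ²)}`. -/
def gradL2sq (ψ : Plane → ℂ) : ℝ :=
  ∫ x : Plane, (‖pd 0 ψ x‖^2 + ‖pd 1 ψ x‖^2)

/-!
Write `T = 2^j`. Along the diagonal the dyadic dilates of `φ̂₀` sum to `1`, so `φ̂₀ > 0` at some
point `p` with nonzero coordinates, hence `φ̂₀` and both `|ζ₁|`, `|ζ₂|` are bounded below on a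
ball `B(p, r)`. On the dilated ball `B(Tp, Tr)` the Gaussian factor is at least `e^{-25/4}`
(as `|ξ - η| ≤ 5T`), the angular factor `η₁²/|η|²` is bounded below, `η₂²/|η|³` is at least a
constant times `T⁻¹`, and `ψ̂ * ψ̂ ≥ |B(0, 1/4)|` because `ψ̂ = 1` on `B(0, 1)` and
`|η| ≤ 3T ≤ 3/4`. So the nonnegative integrand is at least `K/T` on a set of area `π r² T²`,
and the prefactor `(4πT²)⁻¹` turns this into `K r² T⁻¹ / 4`. The integral is a genuine one since
the integrand is bounded by `2 |B(0, 2)| / T` and vanishes for `|η| > 2T`.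
-/

open Metric

lemma continuous_FT (f : 𝓢(Plane, ℂ)) : Continuous (FT f) :=
  (fourierTransformCLM ℂ f).continuous

lemma mul_measureReal_le_integral {α : Type*} [MeasurableSpace α] {μ : Measure α}
    {f : α → ℝ} {s : Set α} {m : ℝ} (hf : Integrable f μ) (hf0 : 0 ≤ f)
    (hs : MeasurableSet s) (hμs : μ s ≠ ∞) (hm : ∀ x ∈ s, m ≤ f x) :
    m * μ.real s ≤ ∫ x, f x ∂μ :=
  (setIntegral_ge_of_const_le_real hs hμs hm hf.integrableOn).trans
    (setIntegral_le_integral hf (Eventually.of_forall hf0))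

lemma measureReal_ball_plane (x : Plane) {r : ℝ} (hr : 0 ≤ r) :
    volume.real (ball x r) = Real.pi * r ^ 2 := by
  rw [measureReal_def, EuclideanSpace.volume_ball_fin_two, ← ENNReal.ofReal_pow hr,
    ← ENNReal.ofReal_mul (by positivity), ENNReal.toReal_ofReal (by positivity), mul_comm]

section EuclideanSpace

variable {ι : Type*} [Fintype ι]

lemma sq_apply_le_norm_sq (η : EuclideanSpace ℝ ι) (i : ι) : η i ^ 2 ≤ ‖η‖ ^ 2 := by
  simpa only [Real.norm_eq_abs, sq_abs] using
    pow_le_pow_left₀ (norm_nonneg _) (PiLp.norm_apply_le η i) 2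

lemma sq_apply_div_norm_sq_le_one (η : EuclideanSpace ℝ ι) (i : ι) : η i ^ 2 / ‖η‖ ^ 2 ≤ 1 :=
  div_le_one_of_le₀ (sq_apply_le_norm_sq η i) (by positivity)

lemma sq_apply_div_norm_cube_le (η : EuclideanSpace ℝ ι) (i : ι) :
    η i ^ 2 / ‖η‖ ^ 3 ≤ ‖η‖⁻¹ := by
  rcases eq_or_ne η 0 with rfl | hη
  · simp
  have hn : 0 < ‖η‖ := norm_pos_iff.mpr hη
  rw [div_le_iff₀ (by positivity)]
  calc η i ^ 2 ≤ ‖η‖ ^ 2 := sq_apply_le_norm_sq η i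
    _ = ‖η‖⁻¹ * ‖η‖ ^ 3 := by field_simp

end EuclideanSpace

lemma one_sub_sq_apply_one_div_norm_sq {η : Plane} (hη : η ≠ 0) :
    1 - η 1 ^ 2 / ‖η‖ ^ 2 = η 0 ^ 2 / ‖η‖ ^ 2 := by
  have hsq : ‖η‖ ^ 2 = η 0 ^ 2 + η 1 ^ 2 := by
    simp [EuclideanSpace.real_norm_sq_eq, Fin.sum_univ_two]
  field_simp [norm_ne_zero_iff.mpr hη]
  linarith

def selfConv (ψ : 𝓢(Plane, ℂ)) (η : Plane) : ℝ :=
  (∫ θ : Plane, FT ψ (η - θ) * FT ψ θ).re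

lemma measurable_selfConv (ψ : 𝓢(Plane, ℂ)) : Measurable (selfConv ψ) := by
  have h : StronglyMeasurable (fun q : Plane × Plane => FT ψ (q.1 - q.2) * FT ψ q.2) :=
    (((continuous_FT ψ).comp (continuous_fst.sub continuous_snd)).mul
      ((continuous_FT ψ).comp continuous_snd)).stronglyMeasurable
  exact Complex.measurable_re.comp h.integral_prod_right'.measurable

namespace IsPsi

variable {ψ : 𝓢(Plane, ℂ)}

lemma FT_eq_zero_of_two_lt_norm (hψ : IsPsi ψ) {θ : Plane} (hθ : 2 < ‖θ‖) : FT ψ θ = 0 := by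
  by_contra h
  exact (hψ.support θ h).not_gt hθ

lemma integrable_FT_sub_mul_FT (hψ : IsPsi ψ) (η : Plane) :
    Integrable (fun θ => FT ψ (η - θ) * FT ψ θ) := by
  refine ((continuous_FT ψ).comp (continuous_const.sub continuous_id)).mul (continuous_FT ψ)
    |>.integrable_of_hasCompactSupport ?_
  refine HasCompactSupport.intro (isCompact_closedBall (0 : Plane) 2) fun θ hθ => ?_
  rw [mem_closedBall_zero_iff, not_le] at hθ
  simp [hψ.FT_eq_zero_of_two_lt_norm hθ]

lemma re_FT_mul_FT (hψ : IsPsi ψ) (η θ : Plane) :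
    (FT ψ η * FT ψ θ).re = (FT ψ η).re * (FT ψ θ).re := by
  simp [Complex.mul_re, hψ.im_zero]

lemma integrable_re_FT_sub_mul_re_FT (hψ : IsPsi ψ) (η : Plane) :
    Integrable (fun θ => (FT ψ (η - θ)).re * (FT ψ θ).re) := by
  simpa only [RCLike.re_to_complex, hψ.re_FT_mul_FT] using (hψ.integrable_FT_sub_mul_FT η).re

lemma selfConv_eq (hψ : IsPsi ψ) (η : Plane) :
    selfConv ψ η = ∫ θ : Plane, (FT ψ (η - θ)).re * (FT ψ θ).re := by
  rw [selfConv, ← RCLike.re_to_complex, ← integral_re (hψ.integrable_FT_sub_mul_FT η)]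
  simp only [RCLike.re_to_complex, hψ.re_FT_mul_FT]

lemma selfConv_nonneg (hψ : IsPsi ψ) (η : Plane) : 0 ≤ selfConv ψ η := by
  rw [hψ.selfConv_eq]
  exact integral_nonneg fun θ => mul_nonneg (hψ.nonneg _) (hψ.nonneg _)

lemma selfConv_le (hψ : IsPsi ψ) (η : Plane) :
    selfConv ψ η ≤ volume.real (closedBall (0 : Plane) 2) := by
  have hvanish : ∀ θ ∉ closedBall (0 : Plane) 2, (FT ψ (η - θ)).re * (FT ψ θ).re = 0 := by
    intro θ hθ
    rw [mem_closedBall_zero_iff, not_le] at hθ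
    simp [hψ.FT_eq_zero_of_two_lt_norm hθ]
  have hle : ∀ θ ∈ closedBall (0 : Plane) 2, ‖(FT ψ (η - θ)).re * (FT ψ θ).re‖ ≤ 1 := by
    intro θ _
    rw [Real.norm_eq_abs, abs_of_nonneg (mul_nonneg (hψ.nonneg _) (hψ.nonneg _))]
    exact mul_le_one₀ (hψ.le_one _) (hψ.nonneg _) (hψ.le_one _)
  rw [hψ.selfConv_eq, ← setIntegral_eq_integral_of_forall_compl_eq_zero hvanish]
  simpa using (norm_setIntegral_le_of_norm_le_const measure_closedBall_lt_top hle).trans'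
    (Real.le_norm_self _)

lemma measureReal_ball_le_selfConv (hψ : IsPsi ψ) {η : Plane} {ρ : ℝ} (hη : ‖η‖ + ρ ≤ 1) :
    volume.real (ball (0 : Plane) ρ) ≤ selfConv ψ η := by
  have hone : ∀ θ ∈ ball (0 : Plane) ρ, 1 ≤ (FT ψ (η - θ)).re * (FT ψ θ).re := by
    intro θ hθ
    rw [mem_ball_zero_iff] at hθ
    have hθ1 : ‖θ‖ ≤ 1 := by linarith [norm_nonneg η]
    have hηθ : ‖η - θ‖ ≤ 1 := by linarith [norm_sub_le η θ]
    simp [hψ.eq_one θ hθ1, hψ.eq_one _ hηθ]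
  rw [hψ.selfConv_eq]
  simpa using mul_measureReal_le_integral (hψ.integrable_re_FT_sub_mul_re_FT η)
    (fun θ => mul_nonneg (hψ.nonneg _) (hψ.nonneg _)) measurableSet_ball measure_ball_lt_top.ne
    hone

end IsPsi

lemma exists_ball_forall_le_and_le_abs {g : Plane → ℝ} (hg : Continuous g) {p : Plane}
    (hgp : 0 < g p) (hp0 : p 0 ≠ 0) (hp1 : p 1 ≠ 0) :
    ∃ r > 0, r ≤ 1 ∧ ∃ a > 0, ∃ b > 0, ∀ ζ ∈ ball p r, a ≤ g ζ ∧ b ≤ |ζ 0| ∧ b ≤ |ζ 1| := by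
  obtain ⟨b, hb⟩ : ∃ b, b = min |p 0| |p 1| / 2 := ⟨_, rfl⟩
  have hb0 : 0 < b := by rw [hb]; have := abs_pos.mpr hp0; have := abs_pos.mpr hp1; positivity
  have hU : IsOpen {ζ : Plane | g p / 2 < g ζ ∧ b < |ζ 0| ∧ b < |ζ 1|} :=
    (isOpen_lt continuous_const hg).inter
      ((isOpen_lt continuous_const (PiLp.continuous_apply 2 _ 0).abs).inter
        (isOpen_lt continuous_const (PiLp.continuous_apply 2 _ 1).abs))
  have hpU : p ∈ {ζ : Plane | g p / 2 < g ζ ∧ b < |ζ 0| ∧ b < |ζ 1|} :=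
    ⟨by linarith, by linarith [min_le_left |p 0| |p 1|], by linarith [min_le_right |p 0| |p 1|]⟩
  obtain ⟨ε, hε, hball⟩ := Metric.isOpen_iff.mp hU p hpU
  refine ⟨min ε 1, by positivity, min_le_right _ _, g p / 2, by positivity, b, hb0,
    fun ζ hζ => ?_⟩
  obtain ⟨h1, h2, h3⟩ := hball (ball_subset_ball (min_le_left _ _) hζ)
  exact ⟨h1.le, h2.le, h3.le⟩

namespace IsLP

variable {φ0 : 𝓢(Plane, ℂ)}

lemma norm_mem_Icc_of_FT_inv_smul_ne_zero (hφ0 : IsLP φ0) {T : ℝ} (hT : 0 < T) {η : Plane}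
    (h : FT φ0 (T⁻¹ • η) ≠ 0) : T / 2 ≤ ‖η‖ ∧ ‖η‖ ≤ 2 * T := by
  obtain ⟨h1, h2⟩ := hφ0.support _ h
  rw [norm_smul, Real.norm_of_nonneg (inv_nonneg.mpr hT.le), inv_mul_eq_div] at h1 h2
  rw [le_div_iff₀ hT] at h1
  rw [div_le_iff₀ hT] at h2
  constructor <;> linarith

lemma exists_re_FT_pos (hφ0 : IsLP φ0) :
    ∃ p : Plane, p 0 ≠ 0 ∧ p 1 ≠ 0 ∧ ‖p‖ ≤ 2 ∧ 0 < (FT φ0 p).re := by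
  set ξ₀ : Plane := !₂[1, 1]
  have hξ₀ : ξ₀ ≠ 0 := fun h => by simpa [ξ₀] using congrArg (· 0) h
  obtain ⟨j, hj⟩ : ∃ j : ℤ, FT φ0 ((2:ℝ)^(-j) • ξ₀) ≠ 0 := by
    by_contra! h
    have hsum := hφ0.partition ξ₀ hξ₀
    simp only [h] at hsum
    exact one_ne_zero (hsum.unique hasSum_zero)
  have hre : (FT φ0 ((2:ℝ)^(-j) • ξ₀)).re ≠ 0 := fun h => hj (Complex.ext h (hφ0.im_zero _))
  exact ⟨(2:ℝ)^(-j) • ξ₀, by simp [ξ₀, zpow_ne_zero], by simp [ξ₀, zpow_ne_zero],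
    (hφ0.support _ hj).2, (hφ0.nonneg _).lt_of_ne' hre⟩

lemma exists_ball_forall_le (hφ0 : IsLP φ0) :
    ∃ p : Plane, ∃ r > 0, ∃ a > 0, ∃ b > 0, ∀ ζ ∈ ball p r,
      ‖ζ‖ ≤ 3 ∧ a ≤ (FT φ0 ζ).re ∧ b ≤ |ζ 0| ∧ b ≤ |ζ 1| := by
  obtain ⟨p, hp0, hp1, hp, hpos⟩ := hφ0.exists_re_FT_pos
  obtain ⟨r, hr, hr1, a, ha, b, hb, hball⟩ :=
    exists_ball_forall_le_and_le_abs (Complex.continuous_re.comp (continuous_FT φ0)) hpos hp0 hp1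
  refine ⟨p, r, hr, a, ha, b, hb, fun ζ hζ => ⟨?_, hball ζ hζ⟩⟩
  have h := norm_sub_norm_le ζ p
  rw [← dist_eq_norm] at h
  linarith [(mem_ball.mp hζ).le.trans hr1]

end IsLP

-- The integrand of `gaussian_smoothed_lower_bound`, with `2^j` written as `T`.
def smoothedIntegrand (φ0 ψ : 𝓢(Plane, ℂ)) (T : ℝ) (ξ η : Plane) : ℝ :=
  Real.exp (-‖ξ - η‖^2 / (4 * T^2)) * (FT φ0 (T⁻¹ • η)).re
    * (1 - (η 1)^2 / ‖η‖^2) * ((η 1)^2 / ‖η‖^3) * selfConv ψ η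

section SmoothedIntegrand

variable {φ0 ψ : 𝓢(Plane, ℂ)} {T : ℝ} {ξ : Plane}

lemma smoothedIntegrand_nonneg (hφ0 : IsLP φ0) (hψ : IsPsi ψ) (T : ℝ) (ξ η : Plane) :
    0 ≤ smoothedIntegrand φ0 ψ T ξ η := by
  have hangle := sub_nonneg.mpr (sq_apply_div_norm_sq_le_one η 1)
  have hφ := hφ0.nonneg (T⁻¹ • η)
  have hconv := hψ.selfConv_nonneg η
  unfold smoothedIntegrand
  positivity

lemma measurable_smoothedIntegrand (φ0 ψ : 𝓢(Plane, ℂ)) (T : ℝ) (ξ : Plane) :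
    Measurable (smoothedIntegrand φ0 ψ T ξ) := by
  have hconv := measurable_selfConv ψ
  have hφ := continuous_FT φ0
  unfold smoothedIntegrand
  fun_prop

lemma smoothedIntegrand_eq_zero (hφ0 : IsLP φ0) (hT : 0 < T) {η : Plane} (hη : 2 * T < ‖η‖) :
    smoothedIntegrand φ0 ψ T ξ η = 0 := by
  have h : FT φ0 (T⁻¹ • η) = 0 := by
    by_contra h
    exact hη.not_ge (hφ0.norm_mem_Icc_of_FT_inv_smul_ne_zero hT h).2
  simp [smoothedIntegrand, h]

lemma smoothedIntegrand_le (hφ0 : IsLP φ0) (hψ : IsPsi ψ) (hT : 0 < T) (ξ η : Plane) :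
    smoothedIntegrand φ0 ψ T ξ η ≤ 2 / T * volume.real (closedBall (0 : Plane) 2) := by
  by_cases h : FT φ0 (T⁻¹ • η) = 0
  · simp only [smoothedIntegrand, h, Complex.zero_re, mul_zero, zero_mul]
    positivity
  have hη := (hφ0.norm_mem_Icc_of_FT_inv_smul_ne_zero hT h).1
  have hB : η 1 ^ 2 / ‖η‖ ^ 3 ≤ 2 / T := by
    refine (sq_apply_div_norm_cube_le η 1).trans ?_
    simpa using inv_anti₀ (by positivity) hη
  calc smoothedIntegrand φ0 ψ T ξ η
      ≤ 1 * 1 * 1 * (2 / T) * volume.real (closedBall (0 : Plane) 2) := by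
        unfold smoothedIntegrand
        have hangle := sub_nonneg.mpr (sq_apply_div_norm_sq_le_one η 1)
        have hφ := hφ0.nonneg (T⁻¹ • η)
        have hconv := hψ.selfConv_nonneg η
        gcongr
        · exact Real.exp_le_one_iff.mpr (by rw [neg_div]; exact neg_nonpos.mpr (by positivity))
        · exact hφ0.le_one _
        · exact sub_le_self _ (by positivity)
        · exact hψ.selfConv_le η
    _ = 2 / T * volume.real (closedBall (0 : Plane) 2) := by ring

lemma integrable_smoothedIntegrand (hφ0 : IsLP φ0) (hψ : IsPsi ψ) (hT : 0 < T) (ξ : Plane) :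
    Integrable (smoothedIntegrand φ0 ψ T ξ) := by
  refine IntegrableOn.integrable_of_forall_notMem_eq_zero (s := closedBall 0 (2 * T)) ?_
    fun η hη => smoothedIntegrand_eq_zero hφ0 hT (by simpa using hη)
  refine IntegrableOn.of_bound measure_closedBall_lt_top
    (measurable_smoothedIntegrand φ0 ψ T ξ).aestronglyMeasurable
    (2 / T * volume.real (closedBall (0 : Plane) 2)) (Eventually.of_forall fun η => ?_)
  rw [Real.norm_of_nonneg (smoothedIntegrand_nonneg hφ0 hψ T ξ η)]
  exact smoothedIntegrand_le hφ0 hψ hT ξ η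

lemma le_smoothedIntegrand_smul (hψ : IsPsi ψ) (hT : 0 < T) (hT4 : T ≤ 1 / 4)
    (hξ : ‖ξ‖ ≤ 2 * T) {ζ : Plane} (hζ : ‖ζ‖ ≤ 3) {a b : ℝ} (ha : 0 ≤ a)
    (hφ : a ≤ (FT φ0 ζ).re) (hb : 0 < b) (hb0 : b ≤ |ζ 0|) (hb1 : b ≤ |ζ 1|) :
    Real.exp (-25 / 4) * a * (b ^ 2 / 9) * (b ^ 2 / 27 / T)
        * volume.real (ball (0 : Plane) (1 / 4))
      ≤ smoothedIntegrand φ0 ψ T ξ (T • ζ) := by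
  have hζ0 : ζ ≠ 0 := fun h => by simp [h] at hb0; linarith
  have hnorm : ‖T • ζ‖ = T * ‖ζ‖ := by rw [norm_smul, Real.norm_of_nonneg hT.le]
  have hnζ : 0 < ‖ζ‖ := norm_pos_iff.mpr hζ0
  have hsq0 : b ^ 2 ≤ ζ 0 ^ 2 := by simpa using pow_le_pow_left₀ hb.le hb0 2
  have hsq1 : b ^ 2 ≤ ζ 1 ^ 2 := by simpa using pow_le_pow_left₀ hb.le hb1 2
  have hgauss : Real.exp (-25 / 4) ≤ Real.exp (-‖ξ - T • ζ‖ ^ 2 / (4 * T ^ 2)) := by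
    have hdist : ‖ξ - T • ζ‖ ≤ 5 * T := by
      nlinarith [norm_sub_le ξ (T • ζ), mul_le_mul_of_nonneg_left hζ hT.le]
    rw [Real.exp_le_exp, neg_div, neg_div, neg_le_neg_iff,
      div_le_div_iff₀ (by positivity) (by norm_num)]
    nlinarith [norm_nonneg (ξ - T • ζ)]
  have hangle : b ^ 2 / 9 ≤ 1 - (T • ζ) 1 ^ 2 / ‖T • ζ‖ ^ 2 := by
    rw [one_sub_sq_apply_one_div_norm_sq (smul_ne_zero hT.ne' hζ0), hnorm, PiLp.smul_apply,
      smul_eq_mul, mul_pow, mul_pow, mul_div_mul_left _ _ (by positivity)]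
    gcongr
    nlinarith
  have hradial : b ^ 2 / 27 / T ≤ (T • ζ) 1 ^ 2 / ‖T • ζ‖ ^ 3 := by
    have hcube : ‖ζ‖ ^ 3 ≤ 27 := by nlinarith [pow_le_pow_left₀ hnζ.le hζ 3]
    rw [hnorm, PiLp.smul_apply, smul_eq_mul, mul_pow, mul_pow, div_div,
      div_le_div_iff₀ (by positivity) (by positivity)]
    have : b ^ 2 * ‖ζ‖ ^ 3 ≤ ζ 1 ^ 2 * 27 := by nlinarith
    nlinarith [pow_pos hT 3]
  have hconv : volume.real (ball (0 : Plane) (1 / 4)) ≤ selfConv ψ (T • ζ) :=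
    hψ.measureReal_ball_le_selfConv (by rw [hnorm]; nlinarith)
  have hφ_nonneg := ha.trans hφ
  have hangle_nonneg := (by positivity : (0 : ℝ) ≤ b ^ 2 / 9).trans hangle
  unfold smoothedIntegrand
  rw [inv_smul_smul₀ hT.ne']
  gcongr

theorem exists_pos_mul_inv_le_integral_smoothedIntegrand (hφ0 : IsLP φ0) :
    ∃ c > 0, ∀ ψ : 𝓢(Plane, ℂ), IsPsi ψ → ∀ T : ℝ, 0 < T → T ≤ 1 / 4 →
      ∀ ξ : Plane, ‖ξ‖ ≤ 2 * T →
        c * T⁻¹ ≤ (4 * Real.pi * T ^ 2)⁻¹ * ∫ η, smoothedIntegrand φ0 ψ T ξ η := by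
  obtain ⟨p, r, hr, a, ha, b, hb, hball⟩ := hφ0.exists_ball_forall_le
  set K := Real.exp (-25 / 4) * a * (b ^ 2 / 9) * (b ^ 2 / 27)
    * volume.real (ball (0 : Plane) (1 / 4))
  have hK : 0 < K := by
    simp only [K, measureReal_ball_plane _ (by norm_num : (0 : ℝ) ≤ 1 / 4)]
    positivity
  refine ⟨K * r ^ 2 / 4, by positivity, fun ψ hψ T hT hT4 ξ hξ => ?_⟩
  have hlow : ∀ η ∈ ball (T • p) (T * r), K / T ≤ smoothedIntegrand φ0 ψ T ξ η := by
    intro η hη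
    have hζ : T⁻¹ • η ∈ ball p r := by
      rw [mem_ball, ← inv_smul_smul₀ hT.ne' p, dist_smul₀, Real.norm_of_nonneg (by positivity),
        inv_mul_lt_iff₀ hT]
      exact hη
    obtain ⟨hζ3, hφ, hb0, hb1⟩ := hball _ hζ
    have := le_smoothedIntegrand_smul hψ hT hT4 hξ hζ3 ha.le hφ hb hb0 hb1
    rw [smul_inv_smul₀ hT.ne'] at this
    convert this using 1
    ring
  have hint := mul_measureReal_le_integral (integrable_smoothedIntegrand hφ0 hψ hT ξ)
    (smoothedIntegrand_nonneg hφ0 hψ T ξ) measurableSet_ball measure_ball_lt_top.ne hlow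
  rw [measureReal_ball_plane _ (by positivity)] at hint
  calc K * r ^ 2 / 4 * T⁻¹ = (4 * Real.pi * T ^ 2)⁻¹ * (K / T * (Real.pi * (T * r) ^ 2)) := by
        field_simp
    _ ≤ (4 * Real.pi * T ^ 2)⁻¹ * ∫ η, smoothedIntegrand φ0 ψ T ξ η := by gcongr

end SmoothedIntegrand

/-- Gaussian-smoothed lower bound on the Fourier side: there is `c > 0`
(depending only on `φ₀`) such that for all `ψ` satisfying (Ψ), `j ≤ -2` and
`2^{j-1} ≤ |ξ| ≤ 2^{j+1}`,
`(4π 2^{2j})⁻¹ ∫ exp(-|ξ-η|²/(4·2^{2j})) φ̂₀(2^{-j}η)(1-η₂²/|η|²)(η₂²/|η|³)(ψ̂*ψ̂)(η) dη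
  ≥ c 2^{-j}`. -/
theorem gaussian_smoothed_lower_bound
    (φ0 : 𝓢(Plane, ℂ)) (hφ0 : IsLP φ0) :
    ∃ c : ℝ, 0 < c ∧ ∀ ψ : 𝓢(Plane, ℂ), IsPsi ψ → ∀ j : ℤ, j ≤ -2 →
      ∀ ξ : Plane, (2:ℝ)^(j-1) ≤ ‖ξ‖ → ‖ξ‖ ≤ (2:ℝ)^(j+1) →
        c * (2:ℝ)^(-j) ≤
          (4 * Real.pi * (2:ℝ)^(2*j))⁻¹ *
            ∫ η : Plane,
              Real.exp (-‖ξ - η‖^2 / (4 * (2:ℝ)^(2*j)))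
                * (FT φ0 ((2:ℝ)^(-j) • η)).re
                * (1 - (η 1)^2 / ‖η‖^2) * ((η 1)^2 / ‖η‖^3)
                * (∫ θ : Plane, FT ψ (η - θ) * FT ψ θ).re := by
  obtain ⟨c, hc, hbound⟩ := exists_pos_mul_inv_le_integral_smoothedIntegrand hφ0
  refine ⟨c, hc, fun ψ hψ j hj ξ _ hξ => ?_⟩
  have hT : (0 : ℝ) < 2 ^ j := zpow_pos two_pos j
  have hT4 : (2 : ℝ) ^ j ≤ 1 / 4 :=
    (zpow_le_zpow_right₀ one_le_two hj).trans_eq (by norm_num)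
  have h2j : (2 : ℝ) ^ (2 * j) = ((2 : ℝ) ^ j) ^ 2 := by
    rw [mul_comm, zpow_mul, zpow_two, sq]
  rw [zpow_add_one₀ two_ne_zero, mul_comm] at hξ
  rw [zpow_neg, h2j]
  exact hbound ψ hψ _ hT hT4 ξ hξ

end
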